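/- arXiv:2602.16402 — 4 statements merged into one kernel-verified Lean document; each statement's English description precedes it below -/
import Mathlib

section
/- Suppose τ : [t₀, ∞) → (0, ∞) is defined by τ(t) = (1/q^q)(t₀ + ∫_{t₀}^t μ(s)^{1/q} ds)^q for some continuous positive function μ and q > 0, and suppose there exist constants C₀ > 0 and b > a ≥ 0 such that ∫_{t₀}^t τ(s)^a μ(s)^{−b} ds ≤ C₀ for all t ≥ t₀. Then there exists C₁ > 0 such that τ(t) ≥ C₁ (t − t₀)^{(qb+1)/(b−a)} for all t ≥ t₀. -/
open scoped intervalIntegral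

lemma stmt3_aux (q a b ε n m : ℝ) (hq : 0 < q) (hb : 0 < b)
    (hε : 0 < ε) (hn : 0 < n) (hm : 0 < m) :
    (ε * ((1 / q ^ (q:ℝ) * n ^ (q:ℝ)) ^ a * m ^ (-b))) ^ (1/(1+q*b)) *
    (ε ^ (-((1/(1+q*b))/(1-1/(1+q*b)))) * (m ^ (1/q) * n ^ ((b-a)/b - 1))) ^ (1 - 1/(1+q*b))
      = 1 / q ^ (q*a*(1/(1+q*b))) := by
  have hqb : (0:ℝ) < 1 + q * b := by positivity
  have hθpos : (0:ℝ) < 1/(1+q*b) := by positivity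
  have h1θ : (0:ℝ) < 1 - 1/(1+q*b) := by
    rw [sub_pos, div_lt_one hqb]; nlinarith
  have hqq : (0:ℝ) < q ^ (q:ℝ) := Real.rpow_pos_of_pos hq q
  have hbase : (0:ℝ) < 1 / q ^ (q:ℝ) * n ^ (q:ℝ) := by positivity
  have hF : (0:ℝ) < (1 / q ^ (q:ℝ) * n ^ (q:ℝ)) ^ a * m ^ (-b) :=
    mul_pos (Real.rpow_pos_of_pos hbase a) (Real.rpow_pos_of_pos hm _)
  have hG : (0:ℝ) < m ^ (1/q) * n ^ ((b-a)/b - 1) :=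
    mul_pos (Real.rpow_pos_of_pos hm _) (Real.rpow_pos_of_pos hn _)
  have hεσ : (0:ℝ) < ε ^ (-((1/(1+q*b))/(1-1/(1+q*b)))) := Real.rpow_pos_of_pos hε _
  have hL : (0:ℝ) < (ε * ((1 / q ^ (q:ℝ) * n ^ (q:ℝ)) ^ a * m ^ (-b))) ^ (1/(1+q*b)) *
      (ε ^ (-((1/(1+q*b))/(1-1/(1+q*b)))) * (m ^ (1/q) * n ^ ((b-a)/b - 1))) ^ (1 - 1/(1+q*b)) :=
    mul_pos (Real.rpow_pos_of_pos (mul_pos hε hF) _)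
      (Real.rpow_pos_of_pos (mul_pos hεσ hG) _)
  have hR : (0:ℝ) < 1 / q ^ (q*a*(1/(1+q*b))) := by
    have := Real.rpow_pos_of_pos hq (q*a*(1/(1+q*b))); positivity
  apply Real.log_injOn_pos (Set.mem_Ioi.2 hL) (Set.mem_Ioi.2 hR)
  rw [Real.log_mul (Real.rpow_pos_of_pos (mul_pos hε hF) _).ne'
      (Real.rpow_pos_of_pos (mul_pos hεσ hG) _).ne',
    Real.log_rpow (mul_pos hε hF), Real.log_rpow (mul_pos hεσ hG),
    Real.log_mul hε.ne' hF.ne', Real.log_mul hεσ.ne' hG.ne',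
    Real.log_mul (Real.rpow_pos_of_pos hbase a).ne' (Real.rpow_pos_of_pos hm (-b)).ne',
    Real.log_rpow hbase, Real.log_rpow hm,
    Real.log_mul (by positivity : (1:ℝ)/q ^ (q:ℝ) ≠ 0) (Real.rpow_pos_of_pos hn q).ne',
    Real.log_rpow hn,
    Real.log_mul (Real.rpow_pos_of_pos hm _).ne' (Real.rpow_pos_of_pos hn _).ne',
    Real.log_rpow hm, Real.log_rpow hn, Real.log_rpow hε,
    Real.log_div one_ne_zero hqq.ne', Real.log_rpow hq, Real.log_one,
    Real.log_div one_ne_zero (Real.rpow_pos_of_pos hq (q*a*(1/(1+q*b)))).ne',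
    Real.log_rpow hq, Real.log_one]
  field_simp
  ring


/-- Lemma 2.1: lower bound on the time scaling function `τ` defined via the
closed-loop control `μ`. -/
theorem stmt3 (t₀ q : ℝ) (ht₀ : 0 < t₀) (hq : 0 < q)
    (μ τ : ℝ → ℝ) (hμc : ContinuousOn μ (Set.Ici t₀)) (hμpos : ∀ t ≥ t₀, 0 < μ t)
    (hτ : ∀ t ≥ t₀, τ t = (1 / q ^ q) * (t₀ + ∫ s in t₀..t, μ s ^ (1/q : ℝ)) ^ q)
    (C₀ a b : ℝ) (hC₀ : 0 < C₀) (ha : 0 ≤ a) (hab : a < b)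
    (hbound : ∀ t ≥ t₀, (∫ s in t₀..t, τ s ^ a * μ s ^ (-b)) ≤ C₀) :
    ∃ C₁ > 0, ∀ t ≥ t₀, τ t ≥ C₁ * (t - t₀) ^ ((q * b + 1) / (b - a)) := by
  have hb : 0 < b := ha.trans_lt hab
  have hq' : q ≠ 0 := hq.ne'
  have hqq : (0:ℝ) < q ^ (q:ℝ) := Real.rpow_pos_of_pos hq q
  have hqb : 0 < 1 + q * b := by positivity
  set θ : ℝ := 1 / (1 + q * b) with hθdef
  have hθpos : 0 < θ := by positivity
  have hθlt : θ < 1 := by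
    rw [hθdef, div_lt_one hqb]; nlinarith
  have h1θ : 0 < 1 - θ := by linarith
  set σ : ℝ := θ / (1 - θ) with hσdef
  have hσpos : 0 < σ := by positivity
  set γ : ℝ := (b - a) / b with hγdef
  have hγpos : 0 < γ := by
    rw [hγdef]; exact div_pos (by linarith) hb
  set K : ℝ := q ^ (q * a * θ) with hKdef
  have hK : 0 < K := Real.rpow_pos_of_pos hq _
  -- extended control
  set μ' : ℝ → ℝ := fun s => μ (max s t₀) with hμ'def
  have hμ'c : Continuous μ' :=
    hμc.comp_continuous (continuous_id.max continuous_const) (fun x => Set.mem_Ici.2 (le_max_right _ _))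
  have hμ'pos : ∀ s, 0 < μ' s := fun s => hμpos _ (le_max_right _ _)
  have hμ'eq : ∀ s, t₀ ≤ s → μ' s = μ s := by
    intro s hs; rw [hμ'def]; simp [max_eq_left hs]
  set g : ℝ → ℝ := fun s => μ' s ^ (1/q : ℝ) with hgdef
  have hgc : Continuous g := hμ'c.rpow_const (fun x => Or.inl (hμ'pos x).ne')
  have hgpos : ∀ s, 0 < g s := fun s => Real.rpow_pos_of_pos (hμ'pos s) _
  set ν : ℝ → ℝ := fun t => t₀ + ∫ s in t₀..t, g s with hνdef
  have hνd : ∀ x, HasDerivAt ν (g x) x := fun x =>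
    ((hgc.integral_hasStrictDerivAt t₀ x).hasDerivAt).const_add t₀
  have hνc : Continuous ν := by
    have : Differentiable ℝ ν := fun x => (hνd x).differentiableAt
    exact this.continuous
  have hνt₀ : ν t₀ = t₀ := by simp [hνdef]
  have hνge : ∀ t, t₀ ≤ t → t₀ ≤ ν t := by
    intro t ht
    have h0 : 0 ≤ ∫ s in t₀..t, g s :=
      intervalIntegral.integral_nonneg ht (fun u _ => (hgpos u).le)
    rw [hνdef]; simpa using h0
  have hνpos : ∀ t, t₀ ≤ t → 0 < ν t := fun t ht => lt_of_lt_of_le ht₀ (hνge t ht)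
  have hτν : ∀ t, t₀ ≤ t → τ t = (1 / q ^ (q:ℝ)) * ν t ^ (q:ℝ) := by
    intro t ht
    rw [hτ t ht]
    have hcongr : (∫ s in t₀..t, μ s ^ (1/q : ℝ)) = ∫ s in t₀..t, g s := by
      apply intervalIntegral.integral_congr
      intro s hs
      rw [Set.uIcc_of_le ht] at hs
      rw [hgdef]
      simp only [hμ'eq s hs.1]
    rw [hcongr]
  -- constant
  set c₃ : ℝ := γ / (2 * K * (1 - θ) * (2 * θ * K * C₀) ^ σ) with hc₃def
  have hden : (0:ℝ) < (2 * θ * K * C₀) ^ σ := Real.rpow_pos_of_pos (by positivity) _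
  have hc₃ : 0 < c₃ := by rw [hc₃def]; positivity
  -- main estimate for t > t₀
  have main : ∀ t, t₀ < t → c₃ * (t - t₀) ^ (1 + σ) ≤ ν t ^ γ := by
    intro t htt
    have ht : t₀ ≤ t := htt.le
    have hT : 0 < t - t₀ := by linarith
    set ε : ℝ := (t - t₀) / (2 * θ * K * C₀) with hεdef
    have hε : 0 < ε := by positivity
    set F : ℝ → ℝ := fun s => ((1 / q ^ (q:ℝ)) * ν s ^ (q:ℝ)) ^ a * μ' s ^ (-b) with hFdef
    set G : ℝ → ℝ := fun s => g s * ν s ^ (γ - 1) with hGdef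
    have hFpos : ∀ s, t₀ ≤ s → 0 < F s := by
      intro s hs
      have h1 : 0 < ν s := hνpos s hs
      have : (0:ℝ) < (1 / q ^ (q:ℝ)) * ν s ^ (q:ℝ) := by positivity
      have h2 : (0:ℝ) < ((1 / q ^ (q:ℝ)) * ν s ^ (q:ℝ)) ^ a := Real.rpow_pos_of_pos this _
      have h3 : (0:ℝ) < μ' s ^ (-b) := Real.rpow_pos_of_pos (hμ'pos s) _
      exact mul_pos h2 h3
    have hGpos : ∀ s, t₀ ≤ s → 0 < G s := by
      intro s hs
      exact mul_pos (hgpos s) (Real.rpow_pos_of_pos (hνpos s hs) _)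
    have hFcont : ContinuousOn F (Set.uIcc t₀ t) := by
      rw [Set.uIcc_of_le ht]
      apply ContinuousOn.mul
      · apply ContinuousOn.rpow_const
        · exact (continuousOn_const.mul ((hνc.continuousOn).rpow_const
            (fun x hx => Or.inl (hνpos x hx.1).ne')))
        · intro x hx
          left
          have h1 : 0 < ν x := hνpos x hx.1
          positivity
      · exact (hμ'c.rpow_const (fun x => Or.inl (hμ'pos x).ne')).continuousOn
    have hGcont : ContinuousOn G (Set.uIcc t₀ t) := by
      rw [Set.uIcc_of_le ht]
      exact hgc.continuousOn.mul
        ((hνc.continuousOn).rpow_const (fun x hx => Or.inl (hνpos x hx.1).ne'))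
    have hFint : IntervalIntegrable F MeasureTheory.volume t₀ t := hFcont.intervalIntegrable
    have hGint : IntervalIntegrable G MeasureTheory.volume t₀ t := hGcont.intervalIntegrable
    -- ∫ F ≤ C₀
    have hFbound : (∫ s in t₀..t, F s) ≤ C₀ := by
      have heq : Set.EqOn F (fun s => τ s ^ a * μ s ^ (-b)) (Set.uIcc t₀ t) := by
        intro s hs
        rw [Set.uIcc_of_le ht] at hs
        rw [hFdef]
        simp only
        rw [← hτν s hs.1, hμ'eq s hs.1]
      rw [intervalIntegral.integral_congr heq]
      exact hbound t ht
    -- ∫ G = (ν t ^ γ - t₀ ^ γ)/γ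
    have hGval : (∫ s in t₀..t, G s) = (ν t ^ γ - t₀ ^ γ) / γ := by
      have hH : ∀ s ∈ Set.uIcc t₀ t, HasDerivAt (fun y => ν y ^ γ / γ) (G s) s := by
        intro s hs
        rw [Set.uIcc_of_le ht] at hs
        have h1 : HasDerivAt (fun y => ν y ^ γ) (g s * γ * ν s ^ (γ - 1)) s :=
          (hνd s).rpow_const (Or.inl (hνpos s hs.1).ne')
        have h2 := h1.div_const γ
        have h3 : g s * γ * ν s ^ (γ - 1) / γ = G s := by
          rw [hGdef]; field_simp
        rwa [h3] at h2
      rw [intervalIntegral.integral_eq_sub_of_hasDerivAt hH hGint, hνt₀]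
      ring
    have hGle : (∫ s in t₀..t, G s) ≤ ν t ^ γ / γ := by
      rw [hGval]
      have h0 : (0:ℝ) ≤ t₀ ^ γ := (Real.rpow_pos_of_pos ht₀ _).le
      exact (div_le_div_iff_of_pos_right hγpos).mpr (by linarith)
    -- pointwise AM-GM
    have hpt : ∀ s ∈ Set.Icc t₀ t,
        1 / K ≤ θ * ε * F s + (1 - θ) * ε ^ (-σ) * G s := by
      intro s hs
      have hs0 : t₀ ≤ s := hs.1
      have hFs := hFpos s hs0
      have hGs := hGpos s hs0
      have hεF : 0 < ε * F s := by positivity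
      have hεσ : (0:ℝ) < ε ^ (-σ) := Real.rpow_pos_of_pos hε _
      have hεG : 0 < ε ^ (-σ) * G s := by positivity
      have hgm := Real.geom_mean_le_arith_mean2_weighted hθpos.le h1θ.le hεF.le hεG.le
        (by ring)
      have hνs : 0 < ν s := hνpos s hs0
      have hμs : 0 < μ' s := hμ'pos s
      have hid : (ε * F s) ^ θ * (ε ^ (-σ) * G s) ^ (1 - θ) = 1 / K :=
        stmt3_aux q a b ε (ν s) (μ' s) hq hb hε hνs hμs
      calc 1 / K = (ε * F s) ^ θ * (ε ^ (-σ) * G s) ^ (1 - θ) := hid.symm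
        _ ≤ θ * (ε * F s) + (1 - θ) * (ε ^ (-σ) * G s) := hgm
        _ = θ * ε * F s + (1 - θ) * ε ^ (-σ) * G s := by ring
    -- integrate
    have hint : (t - t₀) * (1 / K) ≤
        θ * ε * (∫ s in t₀..t, F s) + (1 - θ) * ε ^ (-σ) * (∫ s in t₀..t, G s) := by
      have hconst : (∫ _ in t₀..t, (1 / K : ℝ)) = (t - t₀) * (1 / K) := by
        simp [smul_eq_mul]
      have hsum : (∫ s in t₀..t, (θ * ε * F s + (1 - θ) * ε ^ (-σ) * G s)) =
          θ * ε * (∫ s in t₀..t, F s) + (1 - θ) * ε ^ (-σ) * (∫ s in t₀..t, G s) := by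
        rw [intervalIntegral.integral_add (hFint.const_mul _) (hGint.const_mul _),
          intervalIntegral.integral_const_mul, intervalIntegral.integral_const_mul]
      rw [← hconst, ← hsum]
      apply intervalIntegral.integral_mono_on ht
        intervalIntegrable_const
        ((hFint.const_mul _).add (hGint.const_mul _))
        hpt
    have hεσ : (0:ℝ) < ε ^ (-σ) := Real.rpow_pos_of_pos hε _
    have step1 : (t - t₀) * (1 / K) ≤ (t - t₀) / (2 * K) +
        (1 - θ) * ε ^ (-σ) * (ν t ^ γ / γ) := by
      have h1 : θ * ε * (∫ s in t₀..t, F s) ≤ θ * ε * C₀ :=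
        mul_le_mul_of_nonneg_left hFbound (by positivity)
      have h2 : (1 - θ) * ε ^ (-σ) * (∫ s in t₀..t, G s) ≤
          (1 - θ) * ε ^ (-σ) * (ν t ^ γ / γ) :=
        mul_le_mul_of_nonneg_left hGle (by positivity)
      have h3 : θ * ε * C₀ = (t - t₀) / (2 * K) := by
        rw [hεdef]; field_simp
      linarith
    -- conclude
    have step2 : (t - t₀) / (2 * K) ≤ (1 - θ) * ε ^ (-σ) * (ν t ^ γ / γ) := by
      have : (t - t₀) * (1 / K) - (t - t₀) / (2 * K) = (t - t₀) / (2 * K) := by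
        field_simp; ring
      linarith
    have hεσval : ε ^ (-σ) = (2 * θ * K * C₀) ^ σ / (t - t₀) ^ σ := by
      rw [hεdef, Real.rpow_neg (by positivity), Real.div_rpow hT.le (by positivity)]
      rw [inv_div]
    have hfin : c₃ * (t - t₀) ^ (1 + σ) ≤ ν t ^ γ := by
      rw [hεσval] at step2
      have hTσ : (0:ℝ) < (t - t₀) ^ σ := Real.rpow_pos_of_pos hT _
      have hpow : (t - t₀) ^ (1 + σ) = (t - t₀) * (t - t₀) ^ σ := by
        rw [Real.rpow_add hT, Real.rpow_one]
      set A : ℝ := (2 * θ * K * C₀) ^ σ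
      set Tσ : ℝ := (t - t₀) ^ σ
      set N : ℝ := ν t ^ γ
      have hA : 0 < A := hden
      have hN : 0 < N := Real.rpow_pos_of_pos (hνpos t ht) γ
      have step2' : (t - t₀) / (2 * K) ≤ ((1 - θ) * A * N) / (Tσ * γ) := by
        have hre : (1 - θ) * (A / Tσ) * (N / γ) = ((1 - θ) * A * N) / (Tσ * γ) := by
          field_simp
        rwa [hre] at step2
      rw [div_le_div_iff₀ (by positivity) (by positivity)] at step2'
      rw [hc₃def, hpow, div_mul_eq_mul_div, div_le_iff₀ (by positivity)]
      ring_nf at step2' ⊢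
      linarith [step2']
    exact hfin
  -- assemble
  set p : ℝ := (q * b + 1) / (b - a) with hpdef
  have hppos : 0 < p := by
    rw [hpdef]; exact div_pos (by positivity) (by linarith)
  refine ⟨(1 / q ^ (q:ℝ)) * c₃ ^ ((q:ℝ) / γ), by positivity, ?_⟩
  intro t ht
  rcases eq_or_lt_of_le ht with heq | htt
  · subst heq
    rw [sub_self, Real.zero_rpow hppos.ne', mul_zero, ge_iff_le, hτν t₀ le_rfl, hνt₀]
    positivity
  · have hT : 0 < t - t₀ := by linarith
    have hγν := main t htt
    have hνt : 0 < ν t := hνpos t htt.le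
    have hc₃T : 0 < c₃ * (t - t₀) ^ (1 + σ) := by
      have := Real.rpow_pos_of_pos hT (1 + σ)
      positivity
    -- ν t ≥ (c₃ T^{1+σ})^{1/γ}
    have hν1 : (c₃ * (t - t₀) ^ (1 + σ)) ^ (1/γ) ≤ ν t := by
      have h1 : ((c₃ * (t - t₀) ^ (1 + σ)) : ℝ) ^ (1/γ) ≤ (ν t ^ γ) ^ (1/γ) :=
        Real.rpow_le_rpow hc₃T.le hγν (by positivity)
      rwa [← Real.rpow_mul hνt.le, mul_one_div, div_self hγpos.ne',
        Real.rpow_one] at h1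
    have hexp : (1 + σ) * ((1/γ) * q) = p := by
      have hσval : σ = 1 / (q * b) := by
        rw [hσdef, hθdef]
        rw [div_eq_div_iff (by positivity) (by positivity)]
        field_simp
        ring
      rw [hσval, hγdef, hpdef]
      have hba : b - a ≠ 0 := (sub_pos.2 hab).ne'
      field_simp
    have hfinal : (1 / q ^ (q:ℝ)) * c₃ ^ ((q:ℝ)/γ) * (t - t₀) ^ p ≤ τ t := by
      rw [hτν t ht]
      have h2 : ((c₃ * (t - t₀) ^ (1 + σ)) ^ (1/γ)) ^ (q:ℝ) ≤ ν t ^ (q:ℝ) :=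
        Real.rpow_le_rpow (Real.rpow_nonneg hc₃T.le _) hν1 hq.le
      have h3 : ((c₃ * (t - t₀) ^ (1 + σ)) ^ (1/γ)) ^ (q:ℝ)
          = c₃ ^ ((q:ℝ)/γ) * (t - t₀) ^ p := by
        rw [← Real.rpow_mul hc₃T.le, Real.mul_rpow hc₃.le (Real.rpow_nonneg hT.le _),
          ← Real.rpow_mul hT.le, hexp]
        congr 2
        ring
      rw [h3] at h2
      calc (1 / q ^ (q:ℝ)) * c₃ ^ ((q:ℝ)/γ) * (t - t₀) ^ p
          = (1 / q ^ (q:ℝ)) * (c₃ ^ ((q:ℝ)/γ) * (t - t₀) ^ p) := by ring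
        _ ≤ (1 / q ^ (q:ℝ)) * ν t ^ (q:ℝ) := by
            apply mul_le_mul_of_nonneg_left h2 (by positivity)
    exact hfinal
end

section
/- Let (μ_k)_{k≥0} be a positive sequence and τ_k defined by τ₁ = 0 and τ_k = Σ_{i=0}^{k−2} μ_i for k ≥ 2. Suppose there exist constants C₄ > 0 and a, b, c ≥ 0 with b + c > a such that Σ_{k≥0} τ_k^a μ_k^{−b} μ_{k+1}^{−c} ≤ C₄ < ∞. Then there exists C₅ > 0 such that τ_{k+1} ≥ C₅ k^{(b+c+1)/(b+c−a)} for all k ≥ 2. -/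
open Finset

/-- Hölder counting lemma: `card^(p+1) ≤ (∑ x)^p * ∑ x^(-p)` for positive `x`. -/
lemma holder_count (s : Finset ℕ) (x : ℕ → ℝ) (hx : ∀ i ∈ s, 0 < x i) {p : ℝ} (hp : 0 < p) :
    (s.card : ℝ) ^ (p + 1) ≤ (∑ i ∈ s, x i) ^ p * ∑ i ∈ s, x i ^ (-p) := by
  have hp1 : (0:ℝ) < p + 1 := by linarith
  have hpq : Real.HolderConjugate ((p+1)/p) (p+1) := by
    rw [Real.holderConjugate_iff]
    constructor
    · rw [lt_div_iff₀ hp]; linarith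
    · field_simp
  have key := Real.inner_le_Lp_mul_Lq_of_nonneg (s := s) (p := (p+1)/p) (q := p+1)
      (f := fun i => x i ^ (p/(p+1))) (g := fun i => x i ^ (-(p/(p+1)))) hpq
      (fun i hi => Real.rpow_nonneg (hx i hi).le _)
      (fun i hi => Real.rpow_nonneg (hx i hi).le _)
  have e1 : ∑ i ∈ s, x i ^ (p/(p+1)) * x i ^ (-(p/(p+1))) = (s.card : ℝ) := by
    rw [Finset.card_eq_sum_ones s]
    push_cast
    refine Finset.sum_congr rfl fun i hi => ?_
    rw [← Real.rpow_add (hx i hi)]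
    simp
  have e2 : ∑ i ∈ s, (x i ^ (p/(p+1))) ^ ((p+1)/p) = ∑ i ∈ s, x i := by
    refine Finset.sum_congr rfl fun i hi => ?_
    have h1 : p/(p+1) * ((p+1)/p) = 1 := by field_simp
    rw [← Real.rpow_mul (hx i hi).le, h1, Real.rpow_one]
  have e3 : ∑ i ∈ s, (x i ^ (-(p/(p+1)))) ^ (p+1) = ∑ i ∈ s, x i ^ (-p) := by
    refine Finset.sum_congr rfl fun i hi => ?_
    have h1 : -(p/(p+1)) * (p+1) = -p := by field_simp
    rw [← Real.rpow_mul (hx i hi).le, h1]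
  rw [e1, e2, e3] at key
  have hX : (0:ℝ) ≤ ∑ i ∈ s, x i := Finset.sum_nonneg fun i hi => (hx i hi).le
  have hY : (0:ℝ) ≤ ∑ i ∈ s, x i ^ (-p) :=
    Finset.sum_nonneg fun i hi => Real.rpow_nonneg (hx i hi).le _
  have key2 := Real.rpow_le_rpow (Nat.cast_nonneg _) key hp1.le
  refine key2.trans_eq ?_
  rw [Real.mul_rpow (Real.rpow_nonneg hX _) (Real.rpow_nonneg hY _),
    ← Real.rpow_mul hX, ← Real.rpow_mul hY]
  have h1 : 1 / ((p+1)/p) * (p+1) = p := by field_simp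
  have h2 : 1 / (p+1) * (p+1) = 1 := by field_simp
  rw [h1, h2, Real.rpow_one]

/-- Lemma 3.1 (discrete): lower bound on `τ_{k+1}` from summability of
`τ_k^a μ_k^{−b} μ_{k+1}^{−c}`. -/
theorem stmt4 (μ τ : ℕ → ℝ) (hμ : ∀ k, 0 < μ k) (hτnonneg : ∀ k, 0 ≤ τ k)
    (hτ1 : τ 1 = 0) (hτ : ∀ k ≥ 2, τ k = ∑ i ∈ Finset.range (k - 1), μ i)
    (C₄ a b c : ℝ) (hC₄ : 0 < C₄) (ha : 0 ≤ a) (hb : 0 ≤ b) (hc : 0 ≤ c)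
    (habc : a < b + c)
    (hsum : ∀ n : ℕ, ∑ k ∈ Finset.range n, τ k ^ a * μ k ^ (-b) * μ (k+1) ^ (-c) ≤ C₄) :
    ∃ C₅ > 0, ∀ k : ℕ, k ≥ 2 → τ (k+1) ≥ C₅ * (k : ℝ) ^ ((b + c + 1) / (b + c - a)) := by
  set p := b + c with hpdef
  have hp : 0 < p := lt_of_le_of_lt ha habc
  have hpa : 0 < p - a := by linarith
  set α := (p + 1) / (p - a) with hαdef
  have hα0 : 0 < α := div_pos (by linarith) hpa
  have hτpos : ∀ k, 2 ≤ k → 0 < τ k := by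
    intro k hk
    rw [hτ k hk]
    exact Finset.sum_pos (fun i _ => hμ i) (Finset.nonempty_range_iff.mpr (by omega))
  have hτmono : ∀ m k, 2 ≤ m → m ≤ k → τ m ≤ τ k := by
    intro m k hm hmk
    rw [hτ m hm, hτ k (le_trans hm hmk)]
    exact Finset.sum_le_sum_of_subset_of_nonneg
      (Finset.range_subset_range.mpr (by omega)) (fun i _ _ => (hμ i).le)
  have hμ0 : 0 < μ 0 := hμ 0
  set D := (4:ℝ) ^ (p * α) * 2 ^ p * C₄ with hDdef
  have hDpos : 0 < D := by positivity
  set C₅ := min (μ 0 * (8:ℝ) ^ (-α)) (D ^ (-(p - a)⁻¹)) with hC₅def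
  have hC₅pos : 0 < C₅ := lt_min (by positivity) (by positivity)
  have hDC₅ : D * C₅ ^ (p - a) ≤ 1 := by
    have h1 : C₅ ^ (p - a) ≤ (D ^ (-(p - a)⁻¹)) ^ (p - a) :=
      Real.rpow_le_rpow hC₅pos.le (min_le_right _ _) hpa.le
    have h2 : (D ^ (-(p - a)⁻¹)) ^ (p - a) = D⁻¹ := by
      rw [← Real.rpow_mul hDpos.le]
      have h3 : -(p - a)⁻¹ * (p - a) = -1 := by field_simp
      rw [h3, Real.rpow_neg_one]
    calc D * C₅ ^ (p - a) ≤ D * D⁻¹ :=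
          mul_le_mul_of_nonneg_left (h1.trans_eq h2) hDpos.le
      _ = 1 := mul_inv_cancel₀ hDpos.ne'
  refine ⟨C₅, hC₅pos, ?_⟩
  intro k
  induction k using Nat.strong_induction_on with
  | _ k IH =>
  intro hk
  show C₅ * (k:ℝ) ^ α ≤ τ (k+1)
  rcases lt_or_ge k 8 with hk8 | hk8
  · -- base case: 2 ≤ k < 8
    have hkα : (k:ℝ) ^ α ≤ (8:ℝ) ^ α :=
      Real.rpow_le_rpow (Nat.cast_nonneg _) (by exact_mod_cast hk8.le) hα0.le
    have hC₅le : C₅ ≤ μ 0 * (8:ℝ) ^ (-α) := min_le_left _ _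
    have hμ0τ : μ 0 ≤ τ (k+1) := by
      rw [hτ (k+1) (by omega)]
      exact Finset.single_le_sum (fun i _ => (hμ i).le)
        (Finset.mem_range.mpr (by omega))
    have h8 : (8:ℝ) ^ (-α) * (8:ℝ) ^ α = 1 := by
      rw [← Real.rpow_add (by norm_num)]
      simp
    calc C₅ * (k:ℝ) ^ α ≤ (μ 0 * (8:ℝ) ^ (-α)) * (8:ℝ) ^ α := by
          apply mul_le_mul hC₅le hkα (Real.rpow_nonneg (Nat.cast_nonneg _) _)
          positivity
      _ = μ 0 := by rw [mul_assoc, h8, mul_one]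
      _ ≤ τ (k+1) := hμ0τ
  · -- main case: k ≥ 8
    set m := k / 2 with hmdef
    have hm2 : 2 ≤ m := by omega
    have hm1k : m - 1 < k := by omega
    have hm12 : 2 ≤ m - 1 := by omega
    have hIHm := IH (m-1) hm1k hm12
    have hmm : (m - 1) + 1 = m := by omega
    rw [hmm] at hIHm
    set A : ℝ := (k:ℝ) / 4 with hAdef
    have hkpos : (0:ℝ) < k := by positivity
    have hApos : 0 < A := by rw [hAdef]; positivity
    have hm1A : A ≤ ((m - 1 : ℕ) : ℝ) := by
      have h4 : k ≤ 4 * (m - 1) := by omega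
      have h5 : (k:ℝ) ≤ ((4 * (m - 1) : ℕ) : ℝ) := Nat.cast_le.mpr h4
      push_cast [Nat.cast_mul] at h5
      rw [hAdef]
      linarith
    have hτmA : C₅ * A ^ α ≤ τ m :=
      le_trans (mul_le_mul_of_nonneg_left
        (Real.rpow_le_rpow hApos.le hm1A hα0.le) hC₅pos.le) hIHm
    have hτmpos : 0 < τ m := hτpos m hm2
    set s : Finset ℕ := Finset.Ico m (k-1) with hsdef
    set ν : ℕ → ℝ := fun j => μ j + μ (j+1) with hνdef
    have hν : ∀ j, ν j = μ j + μ (j+1) := fun j => rfl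
    have hνpos : ∀ j, 0 < ν j := fun j => by
      rw [hν]; have := hμ j; have := hμ (j+1); linarith
    -- Step A : τ m ^ a * ∑ ν ^ (-p) ≤ C₄
    have hstepA : τ m ^ a * ∑ j ∈ s, ν j ^ (-p) ≤ C₄ := by
      have hterm : ∀ j ∈ s, τ m ^ a * ν j ^ (-p) ≤
          τ j ^ a * μ j ^ (-b) * μ (j+1) ^ (-c) := by
        intro j hj
        rw [Finset.mem_Ico] at hj
        have hτja : τ m ^ a ≤ τ j ^ a :=
          Real.rpow_le_rpow (hτnonneg m) (hτmono m j hm2 hj.1) ha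
        have hb1 : ν j ^ (-b) ≤ μ j ^ (-b) := by
          apply Real.rpow_le_rpow_of_nonpos (hμ j) ?_ (neg_nonpos.mpr hb)
          rw [hν]; linarith [(hμ (j+1)).le]
        have hc1 : ν j ^ (-c) ≤ μ (j+1) ^ (-c) := by
          apply Real.rpow_le_rpow_of_nonpos (hμ (j+1)) ?_ (neg_nonpos.mpr hc)
          rw [hν]; linarith [(hμ j).le]
        have hsplit : ν j ^ (-p) = ν j ^ (-b) * ν j ^ (-c) := by
          rw [← Real.rpow_add (hνpos j)]
          congr 1
          rw [hpdef]; ring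
        rw [hsplit]
        calc τ m ^ a * (ν j ^ (-b) * ν j ^ (-c))
            ≤ τ j ^ a * (μ j ^ (-b) * μ (j+1) ^ (-c)) := by
              apply mul_le_mul hτja ?_ ?_ (Real.rpow_nonneg (hτnonneg j) _)
              · exact mul_le_mul hb1 hc1 (Real.rpow_nonneg (hνpos j).le _)
                  (Real.rpow_nonneg (hμ j).le _)
              · exact mul_nonneg (Real.rpow_nonneg (hνpos j).le _)
                  (Real.rpow_nonneg (hνpos j).le _)
          _ = τ j ^ a * μ j ^ (-b) * μ (j+1) ^ (-c) := by ring
      calc τ m ^ a * ∑ j ∈ s, ν j ^ (-p)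
          = ∑ j ∈ s, τ m ^ a * ν j ^ (-p) := by rw [Finset.mul_sum]
        _ ≤ ∑ j ∈ s, τ j ^ a * μ j ^ (-b) * μ (j+1) ^ (-c) :=
            Finset.sum_le_sum hterm
        _ ≤ ∑ j ∈ Finset.range (k-1), τ j ^ a * μ j ^ (-b) * μ (j+1) ^ (-c) := by
            apply Finset.sum_le_sum_of_subset_of_nonneg
            · intro j hj
              rw [hsdef, Finset.mem_Ico] at hj
              exact Finset.mem_range.mpr hj.2
            · intro j _ _
              have h1 := Real.rpow_nonneg (hτnonneg j) a
              have h2 := Real.rpow_nonneg (hμ j).le (-b)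
              have h3 := Real.rpow_nonneg (hμ (j+1)).le (-c)
              positivity
        _ ≤ C₄ := hsum (k-1)
    -- Step B : ∑ ν ≤ 2 * τ (k+1)
    have hτk1 : τ (k+1) = ∑ i ∈ Finset.range k, μ i := by
      rw [hτ (k+1) (by omega)]
      norm_num
    have hstepB : ∑ j ∈ s, ν j ≤ 2 * τ (k+1) := by
      have h1 : ∑ j ∈ s, μ j ≤ τ (k+1) := by
        rw [hτk1]
        apply Finset.sum_le_sum_of_subset_of_nonneg
        · intro j hj; rw [hsdef, Finset.mem_Ico] at hj
          exact Finset.mem_range.mpr (by omega)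
        · exact fun i _ _ => (hμ i).le
      have h2 : ∑ j ∈ s, μ (j+1) ≤ τ (k+1) := by
        have hsub : ∑ j ∈ s, μ (j+1) ≤ ∑ j ∈ Finset.range (k-1), μ (j+1) := by
          apply Finset.sum_le_sum_of_subset_of_nonneg
          · intro j hj; rw [hsdef, Finset.mem_Ico] at hj
            exact Finset.mem_range.mpr hj.2
          · exact fun i _ _ => (hμ (i+1)).le
        have heq : ∑ j ∈ Finset.range (k-1), μ (j+1) + μ 0
            = ∑ i ∈ Finset.range k, μ i := by
          conv_rhs => rw [show k = (k-1)+1 by omega,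
            Finset.sum_range_succ' (fun i => μ i) (k-1)]
        rw [hτk1]
        have := (hμ 0).le
        linarith
      calc ∑ j ∈ s, ν j = ∑ j ∈ s, μ j + ∑ j ∈ s, μ (j+1) := by
            simp only [hν, Finset.sum_add_distrib]
        _ ≤ 2 * τ (k+1) := by linarith
    -- Hölder
    have hcard : A ≤ (s.card : ℝ) := by
      rw [hsdef, Nat.card_Ico]
      have h4 : k ≤ 4 * (k - 1 - m) := by omega
      have h5 : (k:ℝ) ≤ ((4 * (k - 1 - m) : ℕ) : ℝ) := Nat.cast_le.mpr h4
      push_cast [Nat.cast_mul] at h5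
      rw [hAdef]
      linarith
    have hhold := holder_count s ν (fun i _ => hνpos i) hp
    have hτk1pos : 0 < τ (k+1) := hτpos (k+1) (by omega)
    have hXnonneg : (0:ℝ) ≤ ∑ j ∈ s, ν j := Finset.sum_nonneg fun j _ => (hνpos j).le
    have hYnonneg : (0:ℝ) ≤ ∑ j ∈ s, ν j ^ (-p) :=
      Finset.sum_nonneg fun j _ => Real.rpow_nonneg (hνpos j).le _
    have hmain : A ^ (p+1) * τ m ^ a ≤ (2 * τ (k+1)) ^ p * C₄ := by
      have h1 : A ^ (p+1) ≤ (s.card : ℝ) ^ (p+1) :=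
        Real.rpow_le_rpow hApos.le hcard (by linarith)
      have h2 : (∑ j ∈ s, ν j) ^ p ≤ (2 * τ (k+1)) ^ p :=
        Real.rpow_le_rpow hXnonneg hstepB hp.le
      have h3 : A ^ (p+1) ≤ (2 * τ (k+1)) ^ p * ∑ j ∈ s, ν j ^ (-p) :=
        h1.trans (hhold.trans (mul_le_mul_of_nonneg_right h2 hYnonneg))
      calc A ^ (p+1) * τ m ^ a
          ≤ ((2 * τ (k+1)) ^ p * ∑ j ∈ s, ν j ^ (-p)) * τ m ^ a :=
            mul_le_mul_of_nonneg_right h3 (Real.rpow_nonneg (hτnonneg m) _)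
        _ = (2 * τ (k+1)) ^ p * (τ m ^ a * ∑ j ∈ s, ν j ^ (-p)) := by ring
        _ ≤ (2 * τ (k+1)) ^ p * C₄ :=
            mul_le_mul_of_nonneg_left hstepA
              (Real.rpow_nonneg (by linarith : (0:ℝ) ≤ 2 * τ (k+1)) _)
    have hτma : (C₅ * A ^ α) ^ a ≤ τ m ^ a :=
      Real.rpow_le_rpow (by positivity) hτmA ha
    -- final contradiction argument
    by_contra hcon
    push_neg at hcon
    have hTp : (2 * τ (k+1)) ^ p < (2 * (C₅ * (k:ℝ) ^ α)) ^ p :=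
      Real.rpow_lt_rpow (by linarith) (by linarith) hp
    have hexp : p + 1 + α * a = p * α := by
      rw [hαdef]; field_simp; ring
    have hL : A ^ (p+1) * (C₅ * A ^ α) ^ a = C₅ ^ a * A ^ (p * α) := by
      calc A ^ (p+1) * (C₅ * A ^ α) ^ a
          = C₅ ^ a * (A ^ (p+1) * A ^ (α * a)) := by
            rw [Real.mul_rpow hC₅pos.le (Real.rpow_nonneg hApos.le _),
              ← Real.rpow_mul hApos.le]
            ring
        _ = C₅ ^ a * A ^ (p + 1 + α * a) := by rw [← Real.rpow_add hApos]
        _ = C₅ ^ a * A ^ (p * α) := by rw [hexp]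
    have hAk : A ^ (p * α) = (k:ℝ) ^ (p * α) / 4 ^ (p * α) := by
      rw [hAdef, Real.div_rpow hkpos.le (by norm_num)]
    have hR : (2 * (C₅ * (k:ℝ) ^ α)) ^ p * C₄ =
        2 ^ p * C₄ * (C₅ ^ p * (k:ℝ) ^ (p * α)) := by
      rw [show (2:ℝ) * (C₅ * (k:ℝ)^α) = 2 * C₅ * (k:ℝ)^α by ring,
        Real.mul_rpow (by positivity) (Real.rpow_nonneg hkpos.le _),
        Real.mul_rpow (by norm_num) hC₅pos.le,
        ← Real.rpow_mul hkpos.le, mul_comm α p]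
      ring
    have hstrict : C₅ ^ a * (k:ℝ) ^ (p * α) / 4 ^ (p * α) <
        2 ^ p * C₄ * (C₅ ^ p * (k:ℝ) ^ (p * α)) := by
      calc C₅ ^ a * (k:ℝ) ^ (p * α) / 4 ^ (p * α)
          = A ^ (p+1) * (C₅ * A ^ α) ^ a := by rw [hL, hAk]; ring
        _ ≤ A ^ (p+1) * τ m ^ a :=
            mul_le_mul_of_nonneg_left hτma (Real.rpow_nonneg hApos.le _)
        _ ≤ (2 * τ (k+1)) ^ p * C₄ := hmain
        _ < (2 * (C₅ * (k:ℝ) ^ α)) ^ p * C₄ := mul_lt_mul_of_pos_right hTp hC₄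
        _ = 2 ^ p * C₄ * (C₅ ^ p * (k:ℝ) ^ (p * α)) := hR
    have hkp : (0:ℝ) < (k:ℝ) ^ (p * α) := Real.rpow_pos_of_pos hkpos _
    have h4p : (0:ℝ) < (4:ℝ) ^ (p * α) := Real.rpow_pos_of_pos (by norm_num) _
    have hC₅a : (0:ℝ) < C₅ ^ a := Real.rpow_pos_of_pos hC₅pos _
    have hC₅split : C₅ ^ p = C₅ ^ a * C₅ ^ (p - a) := by
      rw [← Real.rpow_add hC₅pos]; ring_nf
    rw [div_lt_iff₀ h4p] at hstrict
    have h2 : C₅ ^ a * (k:ℝ) ^ (p * α) <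
        (C₅ ^ a * (k:ℝ) ^ (p * α)) * (D * C₅ ^ (p - a)) := by
      calc C₅ ^ a * (k:ℝ) ^ (p * α)
          < 2 ^ p * C₄ * (C₅ ^ p * (k:ℝ) ^ (p * α)) * 4 ^ (p * α) := hstrict
        _ = (C₅ ^ a * (k:ℝ) ^ (p * α)) * (D * C₅ ^ (p - a)) := by
            rw [hC₅split, hDdef]; ring
    have hgoal : 1 < D * C₅ ^ (p - a) :=
      (lt_mul_iff_one_lt_right (mul_pos hC₅a hkp)).mp h2
    linarith
end

section
/- Consider the discrete energy E_k = τ_{k+1}(L(x_k,λ*) − L(x*,λ*)) + (1/2)‖u_k‖² + (1/2)‖λ_k − λ*‖², where u_k = y_k − x* + γ_k ∇_x L(x_k,λ_k). Assume: (i) u_{k+1} − u_k = −γ_{k+1}∇_x L(x_{k+1},λ_{k+1}); (ii) y_{k+1} = x_{k+1} + (τ_{k+1}/γ_{k+1})(x_{k+1} − x_k); (iii) λ_{k+1} = λ_k + γ_{k+1}(A y_{k+1} − b); (iv) τ_{k+2} = γ_{k+1} + τ_{k+1}; (v) (x*,λ*) is a saddle point of L; (vi) x ↦ L(x,λ*)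 is convex. Then E_{k+1} − E_k ≤ −γ_{k+1}²‖∇_x L(x_{k+1},λ_{k+1})‖² − (1/2)‖λ_{k+1} − λ_k‖² ≤ 0, so (E_k) is non-increasing. -/
open RealInnerProductSpace

lemma grad_convex_ineq {H : Type*} [NormedAddCommGroup H] [InnerProductSpace ℝ H] [CompleteSpace H]
    (f : H → ℝ) (hconv : ConvexOn ℝ Set.univ f) (hdiff : Differentiable ℝ f)
    (a c : H) : ⟪gradient f a, c - a⟫ ≤ f c - f a := by
  set g : ℝ → ℝ := fun t => f (a + t • (c - a)) with hg
  have hmap : ∀ t : ℝ, HasDerivAt (fun t : ℝ => a + t • (c - a)) (c - a) t := by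
    intro t
    simpa using ((hasDerivAt_id t).smul_const (c - a)).const_add a
  have hgrad : HasFDerivAt f ((InnerProductSpace.toDual ℝ H) (gradient f a)) a := by
    simpa using hasGradientAt_iff_hasFDerivAt.mp (hdiff a).hasGradientAt
  have hgd : HasDerivAt g (⟪gradient f a, c - a⟫) 0 := by
    have hgrad0 : HasFDerivAt f ((InnerProductSpace.toDual ℝ H) (gradient f a))
        (a + (0:ℝ) • (c - a)) := by simpa using hgrad
    have := hgrad0.comp_hasDerivAt (f := fun t : ℝ => a + t • (c - a)) 0 (hmap 0)
    rw [InnerProductSpace.toDual_apply_apply] at this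
    exact this
  have hgc : ConvexOn ℝ Set.univ g := by
    have h := hconv.comp_affineMap (AffineMap.lineMap a c : ℝ →ᵃ[ℝ] H)
    have heq : (f ∘ (AffineMap.lineMap a c : ℝ →ᵃ[ℝ] H)) = g := by
      funext t
      simp only [Function.comp_apply, AffineMap.lineMap_apply, hg, vsub_eq_sub, vadd_eq_add]
      rw [add_comm]
    rw [heq] at h
    simpa using h
  have h01 : (0:ℝ) < 1 := one_pos
  have := hgc.le_slope_of_hasDerivAt (Set.mem_univ 0) (Set.mem_univ 1) h01 hgd
  rw [slope_def_field] at this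
  simp [hg] at this ⊢
  linarith [this]

/-- Discrete energy decrease along AAPDA:
`E_{k+1} − E_k ≤ −γ_{k+1}²‖∇_x L(x_{k+1},λ_{k+1})‖² − (1/2)‖λ_{k+1} − λ_k‖² ≤ 0`. -/
theorem stmt10 {H G : Type*}
    [NormedAddCommGroup H] [InnerProductSpace ℝ H] [CompleteSpace H]
    [NormedAddCommGroup G] [InnerProductSpace ℝ G] [CompleteSpace G]
    (f : H → ℝ) (hconv : ConvexOn ℝ Set.univ f) (hdiff : Differentiable ℝ f)
    (A : H →L[ℝ] G) (b : G)
    (x y : ℕ → H) (lam : ℕ → G) (γ τ : ℕ → ℝ)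
    (hγ : ∀ k, 0 < γ k) (hτ : ∀ k, 0 ≤ τ k)
    (xs : H) (ls : G)
    (L : H → G → ℝ) (hL : ∀ z l, L z l = f z + ⟪l, A z - b⟫)
    (hsaddle : ∀ (z : H) (l : G), L xs l ≤ L xs ls ∧ L xs ls ≤ L z ls)
    (gL : ℕ → H)
    (hgL : ∀ k, gL k = gradient f (x k) + ContinuousLinearMap.adjoint A (lam k))
    (u : ℕ → H) (hu : ∀ k, u k = y k - xs + γ k • gL k)
    (hui : ∀ k, u (k+1) - u k = -(γ (k+1)) • gL (k+1))
    (hy : ∀ k, y (k+1) = x (k+1) + (τ (k+1) / γ (k+1)) • (x (k+1) - x k))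
    (hlam : ∀ k, lam (k+1) = lam k + γ (k+1) • (A (y (k+1)) - b))
    (hτrec : ∀ k, τ (k+2) = γ (k+1) + τ (k+1))
    (E : ℕ → ℝ)
    (hE : ∀ k, E k = τ (k+1) * (L (x k) ls - L xs ls)
        + (1/2) * ‖u k‖^2 + (1/2) * ‖lam k - ls‖^2) :
    ∀ k : ℕ,
      E (k+1) - E k ≤ -(γ (k+1))^2 * ‖gL (k+1)‖^2 - (1/2) * ‖lam (k+1) - lam k‖^2
      ∧ -(γ (k+1))^2 * ‖gL (k+1)‖^2 - (1/2) * ‖lam (k+1) - lam k‖^2 ≤ 0 := by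
  intro k
  have hγ' := hγ (k+1)
  have hγne : γ (k+1) ≠ 0 := hγ'.ne'
  -- A xs = b
  have hAxs : A xs = b := by
    have h1 := (hsaddle xs (ls + (A xs - b))).1
    rw [hL, hL] at h1
    have h2 : ⟪ls + (A xs - b), A xs - b⟫ ≤ ⟪ls, A xs - b⟫ := by linarith
    rw [inner_add_left] at h2
    have h3 : ‖A xs - b‖^2 ≤ 0 := by
      rw [← real_inner_self_eq_norm_sq]; linarith
    have h4 : A xs - b = 0 := by
      have := sq_nonneg ‖A xs - b‖
      have : ‖A xs - b‖^2 = 0 := le_antisymm h3 (by positivity)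
      have h5 : ‖A xs - b‖ = 0 := by nlinarith [norm_nonneg (A xs - b)]
      exact norm_eq_zero.mp h5
    exact sub_eq_zero.mp h4
  set γ' := γ (k+1) with hγdef
  set τ' := τ (k+1) with hτdef
  set g := gL (k+1) with hgdef
  set X := x (k+1) with hX
  set Y := y (k+1) with hY0
  set Λ := lam (k+1) with hΛ
  -- convexity inequalities
  have hcv1 : f X - f xs ≤ ⟪gradient f X, X - xs⟫ := by
    have h := grad_convex_ineq f hconv hdiff X xs
    have : (X : H) - xs = -(xs - X) := by abel
    rw [this, inner_neg_right]; linarith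
  have hcv2 : f X - f (x k) ≤ ⟪gradient f X, X - x k⟫ := by
    have h := grad_convex_ineq f hconv hdiff X (x k)
    have : (X : H) - x k = -(x k - X) := by abel
    rw [this, inner_neg_right]; linarith
  -- u recursion
  have huk : u k = u (k+1) + γ' • g := by
    have h := hui k
    have : u k = u (k+1) - (u (k+1) - u k) := by abel
    rw [this, h]; module
  have hnu : ‖u k‖^2 = ‖u (k+1)‖^2 + 2*(γ' * ⟪u (k+1), g⟫) + γ'^2 * ‖g‖^2 := by
    rw [huk, norm_add_sq_real, real_inner_smul_right, norm_smul, mul_pow,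
      Real.norm_eq_abs, sq_abs]
  have hup : ⟪u (k+1), g⟫ = ⟪g, Y - xs⟫ + γ' * ‖g‖^2 := by
    rw [hu (k+1), inner_add_left, real_inner_smul_left, real_inner_self_eq_norm_sq,
      real_inner_comm]
  -- lambda recursion
  have hdl : Λ - lam k = γ' • (A Y - b) := by rw [hΛ, hlam k]; abel
  have hnl : ‖lam k - ls‖^2
      = ‖Λ - ls‖^2 - 2*(γ' * ⟪A Y - b, Λ - ls⟫) + ‖Λ - lam k‖^2 := by
    have h0 : lam k - ls = (Λ - ls) - (Λ - lam k) := by abel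
    rw [h0, norm_sub_sq_real]
    rw [show ⟪Λ - ls, Λ - lam k⟫ = γ' * ⟪A Y - b, Λ - ls⟫ by
      rw [hdl, real_inner_smul_right, real_inner_comm]]
  -- adjoint
  have had : ⟪ContinuousLinearMap.adjoint A Λ, Y - xs⟫ = ⟪Λ, A Y - b⟫ := by
    rw [ContinuousLinearMap.adjoint_inner_left, map_sub, hAxs]
  -- y decomposition
  have hYd : Y - xs = (X - xs) + (τ'/γ') • (X - x k) := by
    rw [hY0, hy k]; abel
  have hdiv : (τ'/γ') * γ' = τ' := div_mul_cancel₀ _ hγne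
  -- inner g with Y - xs
  have h8 : γ' * ⟪g, Y - xs⟫ = γ' * ⟪gradient f X, X - xs⟫ + τ' * ⟪gradient f X, X - x k⟫
      + γ' * ⟪Λ, A Y - b⟫ := by
    rw [hgdef, hgL (k+1), inner_add_left, had, hYd, inner_add_right,
      real_inner_smul_right]
    field_simp
    ring
  -- ls with A Y - b
  have hAYd : A Y - b = (A X - b) + (τ'/γ') • ((A X - b) - (A (x k) - b)) := by
    rw [hY0, hy k, map_add, map_smul, map_sub, ← hτdef, ← hγdef, ← hX]; module
  have h9 : γ' * ⟪ls, A Y - b⟫ = γ' * ⟪ls, A X - b⟫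
      + τ' * (⟪ls, A X - b⟫ - ⟪ls, A (x k) - b⟫) := by
    rw [hAYd, inner_add_right, real_inner_smul_right]
    simp only [inner_sub_right]
    field_simp
  have h10 : ⟪A Y - b, Λ - ls⟫ = ⟪Λ, A Y - b⟫ - ⟪ls, A Y - b⟫ := by
    rw [inner_sub_right, real_inner_comm (A Y - b) Λ, real_inner_comm (A Y - b) ls]
  have hls0 : ⟪ls, A xs - b⟫ = (0:ℝ) := by rw [hAxs, sub_self, inner_zero_right]
  -- key identity
  have key : E (k+1) - E k
      = γ' * ((f X - f xs) - ⟪gradient f X, X - xs⟫)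
      + τ' * ((f X - f (x k)) - ⟪gradient f X, X - x k⟫)
      - (3/2) * γ'^2 * ‖g‖^2 - (1/2) * ‖Λ - lam k‖^2 := by
    rw [hE (k+1), hE k, hτrec k, hL X ls, hL (x k) ls, hL xs ls, hls0]
    have e1 : γ' * ⟪u (k+1), g⟫ = γ' * ⟪g, Y - xs⟫ + γ'^2 * ‖g‖^2 := by
      rw [hup]; ring
    linear_combination (-1/2:ℝ) * hnu - e1 - h8 - (1/2:ℝ) * hnl + γ' * h10 - h9
  have hpos : 0 ≤ γ'^2 * ‖g‖^2 := by positivity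
  have hpos2 : 0 ≤ ‖Λ - lam k‖^2 := by positivity
  constructor
  · have m1 : γ' * ((f X - f xs) - ⟪gradient f X, X - xs⟫) ≤ 0 := by
      apply mul_nonpos_of_nonneg_of_nonpos hγ'.le; linarith
    have m2 : τ' * ((f X - f (x k)) - ⟪gradient f X, X - x k⟫) ≤ 0 := by
      apply mul_nonpos_of_nonneg_of_nonpos (hτ (k+1)); linarith
    rw [key]; linarith
  · linarith
end

section
/- Along the continuous dynamics, with energy E(t) = τ(t)(L(x(t),λ*) − L(x*,λ*)) + (1/2)‖v(t) − x*‖² + (1/2)‖λ(t) − λ*‖², where v̇(t) = −τ̇(t)∇_x L(x(t),λ(t)), ẋ(t) = −(τ̇(t)/τ(t))(x(t) − v(t)) − (τ̇(t)²/τ(t))∇_x L(x(t),λ(t)), and λ̇(t) = τ̇(t)(A(x(t) + (τ(t)/τ̇(t))ẋ(t)) − b), and (x*,λ*) a saddle point, one has Ė(t) ≤ −τ̇(t)²‖∇_x L(x(t),λ(t))‖² ≤ 0 for all t ≥ t₀. -/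
open RealInnerProductSpace

lemma grad_ineq_aux {H : Type*} [NormedAddCommGroup H] [InnerProductSpace ℝ H]
    [CompleteSpace H] (f : H → ℝ) (hconv : ConvexOn ℝ Set.univ f)
    (hdiff : Differentiable ℝ f) (a y : H) :
    ⟪gradient f a, y - a⟫ ≤ f y - f a := by
  have hφconv : ConvexOn ℝ Set.univ (f ∘ (AffineMap.lineMap a y : ℝ →ᵃ[ℝ] H)) := by
    simpa using hconv.comp_affineMap (AffineMap.lineMap a y)
  have hcder : HasDerivAt (fun r : ℝ => (AffineMap.lineMap a y : ℝ →ᵃ[ℝ] H) r) (y - a) 0 := by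
    simp only [AffineMap.lineMap_apply_module']
    simpa using ((hasDerivAt_id (0:ℝ)).smul_const (y - a)).add_const a
  have hfa : HasFDerivAt f (InnerProductSpace.toDual ℝ H (gradient f a))
      ((AffineMap.lineMap a y : ℝ →ᵃ[ℝ] H) 0) := by
    rw [AffineMap.lineMap_apply_zero]
    exact (hdiff a).hasGradientAt.hasFDerivAt
  have hφ : HasDerivAt (f ∘ (AffineMap.lineMap a y : ℝ →ᵃ[ℝ] H))
      ⟪gradient f a, y - a⟫ 0 := by
    simpa using hfa.comp_hasDerivAt 0 hcder
  have := hφconv.le_slope_of_hasDerivAt (Set.mem_univ (0:ℝ)) (Set.mem_univ 1) one_pos hφ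
  rw [slope_def_field] at this
  simpa [AffineMap.lineMap_apply_zero, AffineMap.lineMap_apply_one] using this

/-- Continuous-time energy decrease:
`Ė(t) ≤ −τ̇(t)²‖∇_x L(x(t),λ(t))‖² ≤ 0` along the dynamics. -/
theorem stmt16 {H G : Type*}
    [NormedAddCommGroup H] [InnerProductSpace ℝ H] [CompleteSpace H]
    [NormedAddCommGroup G] [InnerProductSpace ℝ G] [CompleteSpace G]
    (f : H → ℝ) (hconv : ConvexOn ℝ Set.univ f) (hdiff : Differentiable ℝ f)
    (hgradc : Continuous (gradient f))
    (A : H →L[ℝ] G) (b : G) (t₀ : ℝ)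
    (x v : ℝ → H) (xd : ℝ → H) (lam : ℝ → G) (τ τd : ℝ → ℝ)
    (xs : H) (ls : G)
    (L : H → G → ℝ) (hL : ∀ z l, L z l = f z + ⟪l, A z - b⟫)
    (hsaddle : ∀ (z : H) (l : G), L xs l ≤ L xs ls ∧ L xs ls ≤ L z ls)
    (gL : ℝ → H)
    (hgL : ∀ t, gL t = gradient f (x t) + ContinuousLinearMap.adjoint A (lam t))
    (hτpos : ∀ t ≥ t₀, 0 < τ t) (hτdpos : ∀ t ≥ t₀, 0 < τd t)
    (hτ : ∀ t ≥ t₀, HasDerivAt τ (τd t) t)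
    (hv : ∀ t ≥ t₀, HasDerivAt v (-(τd t) • gL t) t)
    (hxd : ∀ t ≥ t₀, xd t = -(τd t / τ t) • (x t - v t) - ((τd t)^2 / τ t) • gL t)
    (hx : ∀ t ≥ t₀, HasDerivAt x (xd t) t)
    (hlam : ∀ t ≥ t₀,
      HasDerivAt lam (τd t • (A (x t + (τ t / τd t) • xd t) - b)) t)
    (E : ℝ → ℝ)
    (hE : ∀ t, E t = τ t * (L (x t) ls - L xs ls)
        + (1/2) * ‖v t - xs‖^2 + (1/2) * ‖lam t - ls‖^2) :
    ∀ t ≥ t₀, deriv E t ≤ -(τd t)^2 * ‖gL t‖^2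
      ∧ -(τd t)^2 * ‖gL t‖^2 ≤ 0 := by
  -- A xs = b
  have hAxs : A xs = b := by
    have h1 := (hsaddle xs (ls + (A xs - b))).1
    rw [hL, hL] at h1
    have h2 : ⟪(A xs - b : G), A xs - b⟫ ≤ 0 := by
      rw [inner_add_left] at h1; linarith
    have := real_inner_self_nonpos.mp h2
    rwa [sub_eq_zero] at this
  intro t ht
  refine ⟨?_, by nlinarith [sq_nonneg (τd t), sq_nonneg ‖gL t‖]⟩
  have hs0 : τ t ≠ 0 := ne_of_gt (hτpos t ht)
  have hsd0 : τd t ≠ 0 := ne_of_gt (hτdpos t ht)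
  -- abbreviations
  set gs : H := gradient f (x t) + ContinuousLinearMap.adjoint A ls with hgs
  -- key vector identities
  have hxsum : x t + (τ t / τd t) • xd t = v t - τd t • gL t := by
    rw [hxd t ht]
    match_scalars <;> field_simp <;> ring
  have hsxd : τ t • xd t = -(τd t) • (x t - v t) - (τd t)^2 • gL t := by
    rw [hxd t ht]
    match_scalars <;> field_simp <;> ring
  have hgdecomp : gL t = gs + ContinuousLinearMap.adjoint A (lam t - ls) := by
    rw [hgL t, hgs, map_sub]; abel
  -- derivative of E
  have h1 : HasDerivAt (fun s => f (x s)) ⟪gradient f (x t), xd t⟫ t := by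
    exact ((hdiff (x t)).hasGradientAt.hasFDerivAt).comp_hasDerivAt t (hx t ht)
  have h2 : HasDerivAt (fun s => ⟪ls, A (x s) - b⟫) ⟪ls, A (xd t)⟫ t := by
    have hΦ := (((innerSL ℝ ls).comp A).hasFDerivAt (x := x t)).comp_hasDerivAt t (hx t ht)
    have := hΦ.sub_const ⟪ls, b⟫
    simpa [inner_sub_right] using this
  have h3 : HasDerivAt (fun s => τ s * (f (x s) + ⟪ls, A (x s) - b⟫ - L xs ls))
      (τd t * (f (x t) + ⟪ls, A (x t) - b⟫ - L xs ls)
        + τ t * (⟪gradient f (x t), xd t⟫ + ⟪ls, A (xd t)⟫)) t :=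
    (hτ t ht).mul ((h1.add h2).sub_const (L xs ls))
  have h4 : HasDerivAt (fun s => (1/2 : ℝ) * ‖v s - xs‖^2)
      ⟪-(τd t) • gL t, v t - xs⟫ t := by
    have hv' : HasDerivAt (fun s => v s - xs) (-(τd t) • gL t) t := (hv t ht).sub_const xs
    have hin := (hv'.inner ℝ hv').const_mul (1/2 : ℝ)
    have funeq : (fun s => (1/2 : ℝ) * ‖v s - xs‖^2)
        = fun s => (1/2 : ℝ) * ⟪v s - xs, v s - xs⟫ := by
      funext s; rw [real_inner_self_eq_norm_sq]
    rw [funeq]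
    refine hin.congr_deriv ?_
    rw [real_inner_comm (v t - xs)]; ring
  have hlamt : HasDerivAt lam (τd t • (A (v t - τd t • gL t) - b)) t := by
    have := hlam t ht; rwa [hxsum] at this
  have h5 : HasDerivAt (fun s => (1/2 : ℝ) * ‖lam s - ls‖^2)
      ⟪τd t • (A (v t - τd t • gL t) - b), lam t - ls⟫ t := by
    have hl' : HasDerivAt (fun s => lam s - ls) (τd t • (A (v t - τd t • gL t) - b)) t :=
      hlamt.sub_const ls
    have hin := (hl'.inner ℝ hl').const_mul (1/2 : ℝ)
    have funeq : (fun s => (1/2 : ℝ) * ‖lam s - ls‖^2)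
        = fun s => (1/2 : ℝ) * ⟪lam s - ls, lam s - ls⟫ := by
      funext s; rw [real_inner_self_eq_norm_sq]
    rw [funeq]
    refine hin.congr_deriv ?_
    rw [real_inner_comm (lam t - ls)]; ring
  have hEfun : E = fun s => τ s * (f (x s) + ⟪ls, A (x s) - b⟫ - L xs ls)
      + (1/2 : ℝ) * ‖v s - xs‖^2 + (1/2 : ℝ) * ‖lam s - ls‖^2 := by
    funext s; rw [hE s, hL]
  have hE' : HasDerivAt E
      (τd t * (f (x t) + ⟪ls, A (x t) - b⟫ - L xs ls)
        + τ t * (⟪gradient f (x t), xd t⟫ + ⟪ls, A (xd t)⟫)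
        + ⟪-(τd t) • gL t, v t - xs⟫
        + ⟪τd t • (A (v t - τd t • gL t) - b), lam t - ls⟫) t := by
    rw [hEfun]; exact (h3.add h4).add h5
  rw [hE'.deriv]
  -- simplify the pieces
  have e1 : τ t * (⟪gradient f (x t), xd t⟫ + ⟪ls, A (xd t)⟫)
      = -(τd t) * ⟪gs, x t - v t⟫ - (τd t)^2 * ⟪gs, gL t⟫ := by
    have : τ t * (⟪gradient f (x t), xd t⟫ + ⟪ls, A (xd t)⟫) = ⟪gs, τ t • xd t⟫ := by
      rw [hgs]
      simp [inner_add_left, real_inner_smul_right, ContinuousLinearMap.adjoint_inner_left]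
      try ring
    rw [this, hsxd]
    simp [inner_sub_right, real_inner_smul_right]
    try ring
  have e2 : ⟪(-(τd t) • gL t : H), v t - xs⟫
      = -(τd t) * ⟪gs, v t - xs⟫ - τd t * ⟪lam t - ls, A (v t - xs)⟫ := by
    rw [real_inner_smul_left, hgdecomp]
    rw [inner_add_left, ContinuousLinearMap.adjoint_inner_left]
    ring
  have e3 : ⟪(τd t • (A (v t - τd t • gL t) - b) : G), lam t - ls⟫
      = τd t * ⟪lam t - ls, A (v t - xs)⟫ - (τd t)^2 * ⟪A (gL t), lam t - ls⟫ := by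
    have hAv : A (v t - τd t • gL t) - b = A (v t - xs) - τd t • A (gL t) := by
      rw [map_sub, map_sub, map_smul, hAxs]
      abel
    rw [real_inner_smul_left, hAv, inner_sub_left, real_inner_smul_left,
      real_inner_comm (A (v t - xs))]
    ring
  have e4 : ⟪gs, gL t⟫ + ⟪A (gL t), lam t - ls⟫ = ‖gL t‖^2 := by
    have h41 : ⟪A (gL t), lam t - ls⟫
        = ⟪gL t, (ContinuousLinearMap.adjoint A) (lam t - ls)⟫ :=
      (ContinuousLinearMap.adjoint_inner_right A (gL t) (lam t - ls)).symm
    have h42 : ⟪gs, gL t⟫ = ⟪gL t, gs⟫ := real_inner_comm _ _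
    rw [h41, h42, ← inner_add_right, ← hgdecomp, real_inner_self_eq_norm_sq]
  have e6 : ⟪gs, x t - v t⟫ + ⟪gs, v t - xs⟫ = ⟪gs, x t - xs⟫ := by
    rw [← inner_add_right]; congr 1; abel
  -- convexity bound
  have e5 : f (x t) + ⟪ls, A (x t) - b⟫ - L xs ls ≤ ⟪gs, x t - xs⟫ := by
    have hgi := grad_ineq_aux f hconv hdiff (x t) xs
    have hlin : ⟪gs, x t - xs⟫
        = ⟪gradient f (x t), x t - xs⟫ + ⟪ls, A (x t) - A xs⟫ := by
      rw [hgs, inner_add_left, ContinuousLinearMap.adjoint_inner_left, map_sub]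
    have hneg : ⟪gradient f (x t), x t - xs⟫ = -⟪gradient f (x t), xs - x t⟫ := by
      rw [← inner_neg_right]; congr 1; abel
    rw [hL, hlin, hneg]
    have hls : ⟪ls, A (x t) - b⟫ - ⟪ls, A xs - b⟫ = ⟪ls, A (x t) - A xs⟫ := by
      rw [← inner_sub_right]; congr 1; abel
    linarith [hls]
  -- put it together
  rw [e1, e2, e3]
  have key : -(τd t) * ⟪gs, x t - v t⟫ + -(τd t) * ⟪gs, v t - xs⟫
      = -(τd t) * ⟪gs, x t - xs⟫ := by rw [← e6]; ring
  have hsd := (hτdpos t ht).le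
  nlinarith [mul_le_mul_of_nonneg_left e5 hsd, e4, key, e6]
end
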